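/- arXiv:2012.07689 — 3 statements merged into one kernel-verified Lean document; each statement's English description precedes it below -/
import Mathlib

section
/- Let A ∈ ℝ^{l×m×n} be a tensor, and let U ∈ ℝ^{l×p}, V ∈ ℝ^{m×q}, W ∈ ℝ^{n×r} have orthonormal columns with p ≤ l, q ≤ m, r ≤ n. Then the least squares problem min_S ‖A − (U,V,W)·S‖ over S ∈ ℝ^{p×q×r} has the unique solution S = (Uᵀ,Vᵀ,Wᵀ)·A, whose elements are s_{λμν} = A·(u_λ, v_μ, w_ν) (the trilinear form of A on the respective columns). -/
open scoped BigOperators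
open Sum

noncomputable section

/-- Multilinear (Tucker) tensor–matrix product: `(U,V,W)·A`. -/
def tmul {ι₁ ι₂ ι₃ κ₁ κ₂ κ₃ : Type*} [Fintype ι₁] [Fintype ι₂] [Fintype ι₃]
    (U : κ₁ → ι₁ → ℝ) (V : κ₂ → ι₂ → ℝ) (W : κ₃ → ι₃ → ℝ)
    (A : ι₁ → ι₂ → ι₃ → ℝ) : κ₁ → κ₂ → κ₃ → ℝ :=
  fun i j k => ∑ a, ∑ b, ∑ c, U i a * V j b * W k c * A a b c

/-- Squared Frobenius norm of a 3-tensor. -/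
def fro2 {ι₁ ι₂ ι₃ : Type*} [Fintype ι₁] [Fintype ι₂] [Fintype ι₃]
    (A : ι₁ → ι₂ → ι₃ → ℝ) : ℝ := ∑ i, ∑ j, ∑ k, (A i j k) ^ 2

/-- Frobenius norm of a 3-tensor. -/
def fro {ι₁ ι₂ ι₃ : Type*} [Fintype ι₁] [Fintype ι₂] [Fintype ι₃]
    (A : ι₁ → ι₂ → ι₃ → ℝ) : ℝ := Real.sqrt (fro2 A)

/-- Trilinear form `A·(x,y,z)`. -/
def tri {ι₁ ι₂ ι₃ : Type*} [Fintype ι₁] [Fintype ι₂] [Fintype ι₃]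
    (A : ι₁ → ι₂ → ι₃ → ℝ) (x : ι₁ → ℝ) (y : ι₂ → ℝ) (z : ι₃ → ℝ) : ℝ :=
  ∑ i, ∑ j, ∑ k, A i j k * x i * y j * z k

/-- Unit vector (Euclidean norm 1). -/
def unitVec {ι : Type*} [Fintype ι] (x : ι → ℝ) : Prop := ∑ i, x i ^ 2 = 1

/-- A matrix (given as a family of rows) has orthonormal columns. -/
def orthCols {ι κ : Type*} [Fintype ι] [DecidableEq κ] (X : ι → κ → ℝ) : Prop :=
  ∀ a b, (∑ i, X i a * X i b) = if a = b then (1 : ℝ) else 0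

/-!
Flattening 3-tensors to vectors turns `S ↦ (U,V,W)·S` into multiplication by the Kronecker
product `K = U ⊗ V ⊗ W`, which again has orthonormal columns, and `(Uᵀ,Vᵀ,Wᵀ)·A` into `Kᵀ a`.
For such `K` the residual `a - K Kᵀ a` is orthogonal to the range of `K` and `K` is an isometry,
so Pythagoras gives `‖a - K s‖² = ‖a - K Kᵀ a‖² + ‖s - Kᵀ a‖²`: this yields both the minimality
and the uniqueness of the minimiser `s = Kᵀ a`.
-/

open Matrix
open scoped Kronecker

section LeastSquares

variable {m n : Type*} [Fintype m] [Fintype n] [DecidableEq n]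

theorem Matrix.dotProduct_self_sub_mulVec_of_transpose_mul_self_eq_one {K : Matrix m n ℝ}
    (hK : Kᵀ * K = 1) (a : m → ℝ) (s : n → ℝ) :
    (a - K *ᵥ s) ⬝ᵥ (a - K *ᵥ s)
      = (a - K *ᵥ (Kᵀ *ᵥ a)) ⬝ᵥ (a - K *ᵥ (Kᵀ *ᵥ a)) + (s - Kᵀ *ᵥ a) ⬝ᵥ (s - Kᵀ *ᵥ a) := by
  set e := a - K *ᵥ (Kᵀ *ᵥ a)
  set d := s - Kᵀ *ᵥ a
  have hres : a - K *ᵥ s = e - K *ᵥ d := by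
    simp only [e, d, mulVec_sub]; abel
  have hcross : e ⬝ᵥ K *ᵥ d = 0 := by
    rw [dotProduct_mulVec, ← mulVec_transpose, mulVec_sub, mulVec_mulVec, hK, one_mulVec,
      sub_self, zero_dotProduct]
  have hiso : K *ᵥ d ⬝ᵥ K *ᵥ d = d ⬝ᵥ d := by
    rw [dotProduct_mulVec, ← mulVec_transpose, mulVec_mulVec, hK, one_mulVec]
  clear_value e d
  rw [hres, sub_dotProduct, dotProduct_sub, dotProduct_sub, dotProduct_comm (K *ᵥ d), hcross,
    hiso]
  ring

end LeastSquares

section Tensor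

variable {ι₁ ι₂ ι₃ κ₁ κ₂ κ₃ : Type*}

def flat3 (B : ι₁ → ι₂ → ι₃ → ℝ) : ι₁ × ι₂ × ι₃ → ℝ := fun x => B x.1 x.2.1 x.2.2

theorem flat3_injective : Function.Injective (flat3 : (ι₁ → ι₂ → ι₃ → ℝ) → _) :=
  fun _ _ h => funext₃ fun i j k => congrFun h (i, j, k)

theorem flat3_sub (A B : ι₁ → ι₂ → ι₃ → ℝ) : flat3 (A - B) = flat3 A - flat3 B :=
  rfl

variable [Fintype ι₁] [Fintype ι₂] [Fintype ι₃]

theorem fro2_eq_dotProduct (B : ι₁ → ι₂ → ι₃ → ℝ) : fro2 B = flat3 B ⬝ᵥ flat3 B := by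
  simp only [fro2, dotProduct, flat3, Fintype.sum_prod_type, sq]

theorem fro2_nonneg (B : ι₁ → ι₂ → ι₃ → ℝ) : 0 ≤ fro2 B := by
  unfold fro2; positivity

theorem fro2_eq_zero_iff {B : ι₁ → ι₂ → ι₃ → ℝ} : fro2 B = 0 ↔ B = 0 := by
  rw [fro2_eq_dotProduct, dotProduct_self_eq_zero, ← flat3_injective.eq_iff]
  rfl

theorem flat3_tmul (U : Matrix κ₁ ι₁ ℝ) (V : Matrix κ₂ ι₂ ℝ) (W : Matrix κ₃ ι₃ ℝ)
    (A : ι₁ → ι₂ → ι₃ → ℝ) : flat3 (tmul U V W A) = (U ⊗ₖ (V ⊗ₖ W)) *ᵥ flat3 A := by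
  ext ⟨i, j, k⟩
  simp only [flat3, tmul, mulVec, dotProduct, kronecker_apply, Fintype.sum_prod_type]
  refine Finset.sum_congr rfl fun a _ => Finset.sum_congr rfl fun b _ =>
    Finset.sum_congr rfl fun c _ => by ring

theorem tmul_transpose_apply (U : Matrix ι₁ κ₁ ℝ) (V : Matrix ι₂ κ₂ ℝ) (W : Matrix ι₃ κ₃ ℝ)
    (A : ι₁ → ι₂ → ι₃ → ℝ) (a : κ₁) (b : κ₂) (c : κ₃) :
    tmul Uᵀ Vᵀ Wᵀ A a b c = tri A (fun i => U i a) (fun j => V j b) (fun k => W k c) :=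
  Finset.sum_congr rfl fun i _ => Finset.sum_congr rfl fun j _ =>
    Finset.sum_congr rfl fun k _ => by simp only [transpose_apply]; ring

theorem orthCols_iff_transpose_mul_self [DecidableEq κ₁] (U : Matrix ι₁ κ₁ ℝ) :
    orthCols U ↔ Uᵀ * U = 1 := by
  simp only [orthCols, ← Matrix.ext_iff, mul_apply, transpose_apply, one_apply]

variable [DecidableEq κ₁] [DecidableEq κ₂] [DecidableEq κ₃]

theorem transpose_kronecker_mul_self {U : Matrix ι₁ κ₁ ℝ} {V : Matrix ι₂ κ₂ ℝ}
    {W : Matrix ι₃ κ₃ ℝ} (hU : Uᵀ * U = 1) (hV : Vᵀ * V = 1) (hW : Wᵀ * W = 1) :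
    (U ⊗ₖ (V ⊗ₖ W))ᵀ * (U ⊗ₖ (V ⊗ₖ W)) = 1 := by
  rw [← kroneckerMap_transpose, ← kroneckerMap_transpose, ← mul_kronecker_mul,
    ← mul_kronecker_mul, hU, hV, hW, one_kronecker_one, one_kronecker_one]

theorem fro2_sub_tmul [Fintype κ₁] [Fintype κ₂] [Fintype κ₃]
    {U : Matrix ι₁ κ₁ ℝ} {V : Matrix ι₂ κ₂ ℝ} {W : Matrix ι₃ κ₃ ℝ}
    (hU : orthCols U) (hV : orthCols V) (hW : orthCols W)
    (A : ι₁ → ι₂ → ι₃ → ℝ) (S : κ₁ → κ₂ → κ₃ → ℝ) :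
    fro2 (fun i j k => A i j k - tmul U V W S i j k)
      = fro2 (fun i j k => A i j k - tmul U V W (tmul Uᵀ Vᵀ Wᵀ A) i j k)
        + fro2 (S - tmul Uᵀ Vᵀ Wᵀ A) := by
  rw [orthCols_iff_transpose_mul_self] at hU hV hW
  change fro2 (A - tmul U V W S) = fro2 (A - tmul U V W (tmul Uᵀ Vᵀ Wᵀ A)) + _
  simp only [fro2_eq_dotProduct, flat3_sub, flat3_tmul, kroneckerMap_transpose]
  exact dotProduct_self_sub_mulVec_of_transpose_mul_self_eq_one
    (transpose_kronecker_mul_self hU hV hW) _ _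

end Tensor

theorem stmt_1_general {l m n p q r : ℕ}
    (A : Fin l → Fin m → Fin n → ℝ)
    (U : Fin l → Fin p → ℝ) (V : Fin m → Fin q → ℝ) (W : Fin n → Fin r → ℝ)
    (hU : orthCols U) (hV : orthCols V) (hW : orthCols W) :
    (∀ lam mu nu,
      tmul (fun a i => U i a) (fun b j => V j b) (fun c k => W k c) A lam mu nu
        = tri A (fun i => U i lam) (fun j => V j mu) (fun k => W k nu)) ∧
    (∀ S' : Fin p → Fin q → Fin r → ℝ,
      fro (fun i j k => A i j k -
          tmul U V W (tmul (fun a i => U i a) (fun b j => V j b) (fun c k => W k c) A) i j k)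
        ≤ fro (fun i j k => A i j k - tmul U V W S' i j k)) ∧
    (∀ S' : Fin p → Fin q → Fin r → ℝ,
      fro (fun i j k => A i j k - tmul U V W S' i j k)
        = fro (fun i j k => A i j k -
            tmul U V W (tmul (fun a i => U i a) (fun b j => V j b) (fun c k => W k c) A) i j k)
      → S' = tmul (fun a i => U i a) (fun b j => V j b) (fun c k => W k c) A) := by
  have hT : tmul (fun a i => U i a) (fun b j => V j b) (fun c k => W k c) A
      = tmul Uᵀ Vᵀ Wᵀ A := rfl
  rw [hT]
  refine ⟨tmul_transpose_apply U V W A, fun S' => ?_, fun S' hS' => ?_⟩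
  · rw [fro, fro, fro2_sub_tmul hU hV hW A S']
    exact Real.sqrt_le_sqrt (le_add_of_nonneg_right (fro2_nonneg _))
  · rw [fro, fro, Real.sqrt_inj (fro2_nonneg _) (fro2_nonneg _), fro2_sub_tmul hU hV hW A S',
      add_eq_left, fro2_eq_zero_iff, sub_eq_zero] at hS'
    exact hS'

/-- the least squares problem `min_S ‖A − (U,V,W)·S‖` for matrices with
orthonormal columns has the unique solution `S = (Uᵀ,Vᵀ,Wᵀ)·A`, with elements
`s_{λμν} = A·(u_λ,v_μ,w_ν)`. -/
theorem stmt_1 {l m n p q r : ℕ} (hp : p ≤ l) (hq : q ≤ m) (hr : r ≤ n)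
    (A : Fin l → Fin m → Fin n → ℝ)
    (U : Fin l → Fin p → ℝ) (V : Fin m → Fin q → ℝ) (W : Fin n → Fin r → ℝ)
    (hU : orthCols U) (hV : orthCols V) (hW : orthCols W) :
    (∀ lam mu nu,
      tmul (fun a i => U i a) (fun b j => V j b) (fun c k => W k c) A lam mu nu
        = tri A (fun i => U i lam) (fun j => V j mu) (fun k => W k nu)) ∧
    (∀ S' : Fin p → Fin q → Fin r → ℝ,
      fro (fun i j k => A i j k -
          tmul U V W (tmul (fun a i => U i a) (fun b j => V j b) (fun c k => W k c) A) i j k)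
        ≤ fro (fun i j k => A i j k - tmul U V W S' i j k)) ∧
    (∀ S' : Fin p → Fin q → Fin r → ℝ,
      fro (fun i j k => A i j k - tmul U V W S' i j k)
        = fro (fun i j k => A i j k -
            tmul U V W (tmul (fun a i => U i a) (fun b j => V j b) (fun c k => W k c) A) i j k)
      → S' = tmul (fun a i => U i a) (fun b j => V j b) (fun c k => W k c) A) :=
  stmt_1_general A U V W hU hV hW
end
end

section
/- Let A ∈ ℝ^{l×m×n} be a nonnegative tensor. Then the best rank-(1,1,1) approximation problem min_{u,v,w unit vectors, τ ∈ ℝ} ‖A − τ·(u⊗v⊗w)‖ has a solution (u,v,w) with all three vectors entrywise nonnegative. Equivalently, the maximum of |A·(x,y,z)| over unit vectors x,y,z is attained at nonnegative vectors. -/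
open scoped BigOperators
open Sum

noncomputable section

/-! The maximum of `|A·(x,y,z)|` over the product of unit spheres exists by compactness. For a
nonnegative tensor, `|A·(x,y,z)| ≤ A·(|x|,|y|,|z|)` by the triangle inequality, and `|x|, |y|, |z|`
are again unit vectors, so replacing a maximiser by its entrywise absolute values gives a
nonnegative maximiser. -/

section UnitVec

variable {ι : Type*} [Fintype ι]

lemma unitVec_abs {x : ι → ℝ} (hx : unitVec x) : unitVec fun i => |x i| := by
  simpa only [unitVec, sq_abs] using hx

lemma unitVec_pi_single [DecidableEq ι] (i : ι) : unitVec (Pi.single i 1 : ι → ℝ) := by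
  simp [unitVec, Pi.single_apply, ite_pow]

lemma exists_unitVec [Nonempty ι] : ∃ x : ι → ℝ, unitVec x := by
  classical
  exact ⟨_, unitVec_pi_single (Classical.arbitrary ι)⟩

lemma abs_le_one_of_unitVec {x : ι → ℝ} (hx : unitVec x) (i : ι) : |x i| ≤ 1 := by
  have hsq : x i ^ 2 ≤ 1 :=
    hx ▸ Finset.single_le_sum (f := fun i => x i ^ 2) (fun _ _ => sq_nonneg _) (Finset.mem_univ i)
  exact (sq_le_one_iff_abs_le_one _).mp hsq

lemma isCompact_setOf_unitVec : IsCompact {x : ι → ℝ | unitVec x} := by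
  refine Metric.isCompact_of_isClosed_isBounded
    (isClosed_eq (by fun_prop) continuous_const) ?_
  refine (Metric.isBounded_iff_subset_closedBall 0).mpr ⟨1, fun x hx => ?_⟩
  rw [Metric.mem_closedBall, dist_zero_right, pi_norm_le_iff_of_nonneg zero_le_one]
  exact fun i => abs_le_one_of_unitVec hx i

end UnitVec

section Trilinear

variable {ι₁ ι₂ ι₃ : Type*} [Fintype ι₁] [Fintype ι₂] [Fintype ι₃]

lemma continuous_tri (A : ι₁ → ι₂ → ι₃ → ℝ) :
    Continuous fun p : (ι₁ → ℝ) × (ι₂ → ℝ) × (ι₃ → ℝ) => tri A p.1 p.2.1 p.2.2 := by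
  unfold tri
  fun_prop

lemma abs_tri_le_tri_abs {A : ι₁ → ι₂ → ι₃ → ℝ} (hA : ∀ i j k, 0 ≤ A i j k)
    (x : ι₁ → ℝ) (y : ι₂ → ℝ) (z : ι₃ → ℝ) :
    |tri A x y z| ≤ tri A (fun i => |x i|) (fun j => |y j|) (fun k => |z k|) := by
  have habs : ∀ i j k, A i j k * |x i| * |y j| * |z k| = |A i j k * x i * y j * z k| := by
    intro i j k
    simp only [abs_mul, abs_of_nonneg (hA i j k)]
  simp only [tri, habs]
  refine (Finset.abs_sum_le_sum_abs _ _).trans (Finset.sum_le_sum fun i _ => ?_)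
  refine (Finset.abs_sum_le_sum_abs _ _).trans (Finset.sum_le_sum fun j _ => ?_)
  exact Finset.abs_sum_le_sum_abs _ _

lemma exists_isMax_abs_tri [Nonempty ι₁] [Nonempty ι₂] [Nonempty ι₃]
    (A : ι₁ → ι₂ → ι₃ → ℝ) :
    ∃ (x₀ : ι₁ → ℝ) (y₀ : ι₂ → ℝ) (z₀ : ι₃ → ℝ), unitVec x₀ ∧ unitVec y₀ ∧ unitVec z₀ ∧
      ∀ x y z, unitVec x → unitVec y → unitVec z → |tri A x y z| ≤ |tri A x₀ y₀ z₀| := by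
  obtain ⟨x, hx⟩ := exists_unitVec (ι := ι₁)
  obtain ⟨y, hy⟩ := exists_unitVec (ι := ι₂)
  obtain ⟨z, hz⟩ := exists_unitVec (ι := ι₃)
  have hcompact : IsCompact ({x : ι₁ → ℝ | unitVec x} ×ˢ
      ({y : ι₂ → ℝ | unitVec y} ×ˢ {z : ι₃ → ℝ | unitVec z})) :=
    isCompact_setOf_unitVec.prod (isCompact_setOf_unitVec.prod isCompact_setOf_unitVec)
  obtain ⟨⟨x₀, y₀, z₀⟩, ⟨hx₀, hy₀, hz₀⟩, hmax⟩ :=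
    hcompact.exists_isMaxOn ⟨(x, y, z), hx, hy, hz⟩ (continuous_tri A).abs.continuousOn
  exact ⟨x₀, y₀, z₀, hx₀, hy₀, hz₀,
    fun x y z hx hy hz => isMaxOn_iff.mp hmax (x, y, z) ⟨hx, hy, hz⟩⟩

end Trilinear

/-- a nonnegative tensor has a nonnegative best rank-(1,1,1) approximation:
the maximum of `|A·(x,y,z)|` over unit vectors is attained at nonnegative unit vectors. -/
theorem stmt_2 {l m n : ℕ} (hl : 0 < l) (hm : 0 < m) (hn : 0 < n)
    (A : Fin l → Fin m → Fin n → ℝ) (hA : ∀ i j k, 0 ≤ A i j k) :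
    ∃ (u : Fin l → ℝ) (v : Fin m → ℝ) (w : Fin n → ℝ),
      unitVec u ∧ unitVec v ∧ unitVec w ∧
      (∀ i, 0 ≤ u i) ∧ (∀ j, 0 ≤ v j) ∧ (∀ k, 0 ≤ w k) ∧
      ∀ (x : Fin l → ℝ) (y : Fin m → ℝ) (z : Fin n → ℝ),
        unitVec x → unitVec y → unitVec z → |tri A x y z| ≤ tri A u v w := by
  have := Fin.pos_iff_nonempty.mp hl
  have := Fin.pos_iff_nonempty.mp hm
  have := Fin.pos_iff_nonempty.mp hn
  obtain ⟨x₀, y₀, z₀, hx₀, hy₀, hz₀, hmax⟩ := exists_isMax_abs_tri A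
  refine ⟨_, _, _, unitVec_abs hx₀, unitVec_abs hy₀, unitVec_abs hz₀,
    fun i => abs_nonneg _, fun j => abs_nonneg _, fun k => abs_nonneg _,
    fun x y z hx hy hz => (hmax x y z hx hy hz).trans (abs_tri_le_tri_abs hA x₀ y₀ z₀)⟩
end
end

section
/- Let U ∈ ℝ^{m×2} with m > 2 satisfy UᵀU = I₂, let A ∈ ℝ^{2×2} be symmetric, and set Z = U A Uᵀ, partitioned into blocks Z = [Z₁₁ Z₁₂; Z₁₂ᵀ Z₂₂] with Z₁₂ ∈ ℝ^{m₁×m₂}, m₁ + m₂ = m, with rows of U partitioned accordingly as U = [X; Y] with X ∈ ℝ^{m₁×2}, Y ∈ ℝ^{m₂×2}. Then Z₁₂ = 0 and rank(Z) = 2 if and only if, after right-multiplication of U by a suitable 2×2 orthogonal matrix Q (and replacing A by QᵀAQ), one of the following holds: (i) U = [u₁ 0; 0 u₂] (block-diagonal structure), A is diagonal with both diagonal entries nonzero; (ii) the bottom block of U is zero and rank(A) = 2; (iii) the top block of U is zero and rank(A) = 2. -/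
open scoped BigOperators
open Sum

noncomputable section

open Matrix

/-! Write `U = [X; Y]`, so that `Z₁₂ = X A Yᵀ`, `XᵀX + YᵀY = 1`, and `rank Z = rank A`.
Rotate by an orthogonal `Q` diagonalizing `XᵀX = diag d`; then `YᵀY = 1 - diag d`, and
`Xᵀ (X A Yᵀ) Y = 0` reads `d a * A a b * (1 - d b) = 0`. If some `d a ∉ {0, 1}`, the symmetry
of `A` kills row `a` of `A`, contradicting `det A ≠ 0`. So `d ∈ {0, 1}²`: `d = (1, 1)` forces
`Y = 0`, `d = (0, 0)` forces `X = 0`, and `d = (1, 0)` says that `X` lives on the first column,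
`Y` on the second, and `A₀₁ = 0`. -/

namespace Matrix

theorem det_ne_zero_of_rank_eq_card {K n : Type*} [Field K] [Fintype n] [DecidableEq n]
    {A : Matrix n n K} (h : A.rank = Fintype.card n) : A.det ≠ 0 := by
  have hrange : LinearMap.range A.mulVecLin = ⊤ :=
    Submodule.eq_top_of_finrank_eq (by simpa [rank] using h)
  have hA : IsUnit A := mulVec_surjective_iff_isUnit.mp (LinearMap.range_eq_top.mp hrange)
  exact ((isUnit_iff_isUnit_det A).mp hA).ne_zero

theorem rank_mul_mul_transpose {R m n : Type*} [CommRing R] [StrongRankCondition R]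
    [Fintype m] [Fintype n] [DecidableEq n] {U : Matrix m n R} (hU : Uᵀ * U = 1)
    (A : Matrix n n R) : (U * A * Uᵀ).rank = A.rank := by
  refine le_antisymm ((rank_mul_le_left _ _).trans (rank_mul_le_right _ _)) ?_
  calc A.rank = (Uᵀ * (U * A * Uᵀ) * U).rank := by
        simp only [Matrix.mul_assoc, hU, Matrix.mul_one, ← Matrix.mul_assoc Uᵀ U, Matrix.one_mul]
    _ ≤ (U * A * Uᵀ).rank := (rank_mul_le_left _ _).trans (rank_mul_le_right _ _)

section OrthogonalGroup

variable {R m n : Type*} [CommRing R] [Fintype n] [DecidableEq n] {Q : Matrix n n R}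

theorem mul_mul_transpose_of_mem_orthogonalGroup (hQ : Q ∈ orthogonalGroup n R)
    (U : Matrix m n R) (A : Matrix n n R) :
    (U * Q) * (Qᵀ * A * Q) * (U * Q)ᵀ = U * A * Uᵀ := by
  have hQQ : Q * Qᵀ = 1 := (mem_orthogonalGroup_iff n R).mp hQ
  simp only [transpose_mul, Matrix.mul_assoc]
  rw [← Matrix.mul_assoc Q Qᵀ, hQQ, Matrix.one_mul, ← Matrix.mul_assoc Q Qᵀ, hQQ, Matrix.one_mul]

theorem transpose_mul_self_mul_of_mem_orthogonalGroup [Fintype m]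
    (hQ : Q ∈ orthogonalGroup n R) {U : Matrix m n R} (hU : Uᵀ * U = 1) :
    (U * Q)ᵀ * (U * Q) = 1 := by
  rw [transpose_mul, Matrix.mul_assoc, ← Matrix.mul_assoc Uᵀ, hU, Matrix.one_mul,
    (mem_orthogonalGroup_iff' n R).mp hQ]

theorem rank_transpose_mul_mul_of_mem_orthogonalGroup [StrongRankCondition R]
    (hQ : Q ∈ orthogonalGroup n R) (A : Matrix n n R) : (Qᵀ * A * Q).rank = A.rank := by
  have hQQ : Qᵀᵀ * Qᵀ = 1 := by
    rw [transpose_transpose]; exact (mem_orthogonalGroup_iff n R).mp hQ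
  simpa only [transpose_transpose] using rank_mul_mul_transpose hQQ A

end OrthogonalGroup

theorem IsSymm.transpose_mul_mul {R m n : Type*} [CommRing R] [Fintype n]
    {A : Matrix n n R} (hA : A.IsSymm) (Q : Matrix n m R) : (Qᵀ * A * Q).IsSymm := by
  simp only [IsSymm, transpose_mul, transpose_transpose, hA.eq, Matrix.mul_assoc]

theorem isSymm_transpose_mul_self' {R m n : Type*} [CommRing R] [Fintype m]
    (X : Matrix m n R) : (Xᵀ * X).IsSymm := by
  simp only [IsSymm, transpose_mul, transpose_transpose]

theorem col_eq_zero_of_transpose_mul_self_apply_eq_zero {R m n : Type*} [CommRing R]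
    [LinearOrder R] [IsStrictOrderedRing R] [Fintype m] {X : Matrix m n R} {a : n}
    (h : (Xᵀ * X) a a = 0) (i : m) : X i a = 0 :=
  congrFun (dotProduct_self_eq_zero.mp h) i

section Blocks

variable {R m₁ m₂ n : Type*} [CommRing R]

theorem transpose_mul_self_eq_toRows [Fintype m₁] [Fintype m₂] (U : Matrix (m₁ ⊕ m₂) n R) :
    Uᵀ * U = U.toRows₁ᵀ * U.toRows₁ + U.toRows₂ᵀ * U.toRows₂ := by
  conv_lhs => rw [← fromRows_toRows U, transpose_fromRows, fromCols_mul_fromRows]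

theorem toRows₁_mul {o : Type*} [Fintype n] (U : Matrix (m₁ ⊕ m₂) n R) (Q : Matrix n o R) :
    (U * Q).toRows₁ = U.toRows₁ * Q :=
  rfl

theorem mul_mul_transpose_inl_inr [Fintype n] (U : Matrix (m₁ ⊕ m₂) n R) (A : Matrix n n R)
    (i : m₁) (j : m₂) : (U * A * Uᵀ) (inl i) (inr j) = (U.toRows₁ * A * U.toRows₂ᵀ) i j :=
  rfl

end Blocks

theorem exists_mem_orthogonalGroup_transpose_mul_mul_eq_diagonal {n : Type*} [Fintype n]
    [DecidableEq n] {P : Matrix n n ℝ} (hP : P.IsSymm) :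
    ∃ Q ∈ orthogonalGroup n ℝ, ∃ d : n → ℝ, Qᵀ * P * Q = diagonal d := by
  have hH : P.IsHermitian := isHermitian_iff_isSelfAdjoint.mpr hP
  refine ⟨hH.eigenvectorUnitary, hH.eigenvectorUnitary.2, hH.eigenvalues, ?_⟩
  simpa [Unitary.conjStarAlgAut_apply, RCLike.ofReal_real_eq_id, star_eq_conjTranspose,
    conjTranspose_eq_transpose_of_trivial, Matrix.mul_assoc]
    using hH.conjStarAlgAut_star_eigenvectorUnitary

theorem exists_mem_orthogonalGroup_transpose_mul_mul_eq_diagonal_antitone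
    {P : Matrix (Fin 2) (Fin 2) ℝ} (hP : P.IsSymm) :
    ∃ Q ∈ orthogonalGroup (Fin 2) ℝ, ∃ d : Fin 2 → ℝ, d 1 ≤ d 0 ∧ Qᵀ * P * Q = diagonal d := by
  obtain ⟨Q, hQ, d, hd⟩ := exists_mem_orthogonalGroup_transpose_mul_mul_eq_diagonal hP
  rcases le_total (d 1) (d 0) with h | h
  · exact ⟨Q, hQ, d, h, hd⟩
  set σ : Matrix (Fin 2) (Fin 2) ℝ := !![0, 1; 1, 0]
  have hσ : σ ∈ orthogonalGroup (Fin 2) ℝ := by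
    rw [mem_orthogonalGroup_iff]
    ext i j
    fin_cases i <;> fin_cases j <;> simp [σ, mul_apply, Fin.sum_univ_two]
  refine ⟨Q * σ, mul_mem hQ hσ, ![d 1, d 0], by simpa using h, ?_⟩
  rw [show (Q * σ)ᵀ * P * (Q * σ) = σᵀ * (Qᵀ * P * Q) * σ by
    simp only [transpose_mul, Matrix.mul_assoc], hd]
  ext i j
  fin_cases i <;> fin_cases j <;> simp [σ, mul_apply, Fin.sum_univ_two]

theorem diagonal_mul_mul_one_sub_diagonal_apply {R n : Type*} [CommRing R] [Fintype n]
    [DecidableEq n] (d : n → R) (M : Matrix n n R) (a b : n) :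
    (diagonal d * M * (1 - diagonal d)) a b = d a * M a b * (1 - d b) := by
  simp only [Matrix.mul_sub, Matrix.mul_one, sub_apply, mul_diagonal, diagonal_mul]
  ring

theorem eq_zero_or_eq_one_of_mul_mul_one_sub_eq_zero {R n : Type*} [CommRing R]
    [NoZeroDivisors R] [Fintype n] [DecidableEq n] {M : Matrix n n R} (hM : M.IsSymm)
    (hdet : M.det ≠ 0) {d : n → R} (h : ∀ a b, d a * M a b * (1 - d b) = 0) (a : n) :
    d a = 0 ∨ d a = 1 := by
  by_contra! had
  refine hdet (det_eq_zero_of_row_eq_zero a fun b => ?_)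
  have h₁ : M a b * (1 - d b) = 0 := by
    simpa [had.1, mul_assoc] using h a b
  have h₂ : d b * M a b = 0 := by
    have := h b a
    rw [hM.apply] at this
    simpa [sub_eq_zero, Ne.symm had.2] using this
  linear_combination h₁ + h₂

theorem cases_of_toRows₁_mul_mul_transpose_toRows₂_eq_zero {m₁ m₂ : Type*} [Fintype m₁]
    [Fintype m₂] {U : Matrix (m₁ ⊕ m₂) (Fin 2) ℝ} (hU : Uᵀ * U = 1)
    {d : Fin 2 → ℝ} (hd : d 1 ≤ d 0) (hX : U.toRows₁ᵀ * U.toRows₁ = diagonal d)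
    {A : Matrix (Fin 2) (Fin 2) ℝ} (hA : A.IsSymm) (hdet : A.det ≠ 0)
    (hZ : U.toRows₁ * A * U.toRows₂ᵀ = 0) :
    ((∀ i, U (inl i) 1 = 0) ∧ (∀ j, U (inr j) 0 = 0) ∧
      A 0 1 = 0 ∧ A 1 0 = 0 ∧ A 0 0 ≠ 0 ∧ A 1 1 ≠ 0) ∨
    (∀ j a, U (inr j) a = 0) ∨ (∀ i a, U (inl i) a = 0) := by
  have hY : U.toRows₂ᵀ * U.toRows₂ = 1 - diagonal d := by
    rw [← hU, transpose_mul_self_eq_toRows, hX, add_sub_cancel_left]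
  have hdA : ∀ a b, d a * A a b * (1 - d b) = 0 := fun a b => by
    rw [← diagonal_mul_mul_one_sub_diagonal_apply, ← hY, ← hX]
    calc _ = (U.toRows₁ᵀ * (U.toRows₁ * A * U.toRows₂ᵀ) * U.toRows₂) a b := by
          simp only [Matrix.mul_assoc]
      _ = 0 := by rw [hZ, Matrix.mul_zero, Matrix.zero_mul, zero_apply]
  have hXcol : ∀ a, d a = 0 → ∀ i, U (inl i) a = 0 := fun a ha =>
    col_eq_zero_of_transpose_mul_self_apply_eq_zero (X := U.toRows₁)
      (by rw [hX, diagonal_apply_eq, ha])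
  have hYcol : ∀ a, d a = 1 → ∀ j, U (inr j) a = 0 := fun a ha =>
    col_eq_zero_of_transpose_mul_self_apply_eq_zero (X := U.toRows₂)
      (by rw [hY, sub_apply, one_apply_eq, diagonal_apply_eq, ha, sub_self])
  have hd01 := eq_zero_or_eq_one_of_mul_mul_one_sub_eq_zero hA hdet hdA
  rcases hd01 0 with h0 | h0 <;> rcases hd01 1 with h1 | h1
  · exact .inr <| .inr fun i a => by fin_cases a <;> simp [hXcol _ h0, hXcol _ h1]
  · linarith
  · have hA01 : A 0 1 = 0 := by simpa [h0, h1] using hdA 0 1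
    have hA10 : A 1 0 = 0 := by rw [hA.apply]; exact hA01
    have hdiag : A 0 0 * A 1 1 ≠ 0 := by simpa [det_fin_two, hA01] using hdet
    exact .inl ⟨hXcol 1 h1, hYcol 0 h0, hA01, hA10, left_ne_zero_of_mul hdiag,
      right_ne_zero_of_mul hdiag⟩
  · exact .inr <| .inl fun j a => by fin_cases a <;> simp [hYcol _ h0, hYcol _ h1]

theorem mul_mul_transpose_inl_inr_eq_zero {R m₁ m₂ : Type*} [CommRing R]
    {V : Matrix (m₁ ⊕ m₂) (Fin 2) R} {B : Matrix (Fin 2) (Fin 2) R}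
    (h : ((∀ i, V (inl i) 1 = 0) ∧ (∀ j, V (inr j) 0 = 0) ∧ B 0 1 = 0) ∨
      (∀ j a, V (inr j) a = 0) ∨ (∀ i a, V (inl i) a = 0)) (i : m₁) (j : m₂) :
    (V * B * Vᵀ) (inl i) (inr j) = 0 := by
  simp only [mul_apply, Fin.sum_univ_two, transpose_apply]
  rcases h with ⟨hX, hY, hB⟩ | hY | hX
  · simp [hX, hY, hB]
  · simp [hY]
  · simp [hX]

end Matrix

theorem stmt_4_general {m₁ m₂ : ℕ} (U : Matrix (Fin m₁ ⊕ Fin m₂) (Fin 2) ℝ) (hU : Uᵀ * U = 1)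
    (A : Matrix (Fin 2) (Fin 2) ℝ) (hA : A.IsSymm) :
    ((∀ i j, (U * A * Uᵀ) (inl i) (inr j) = 0) ∧ (U * A * Uᵀ).rank = 2) ↔
    ∃ Q ∈ Matrix.orthogonalGroup (Fin 2) ℝ,
      (((∀ i, (U * Q) (inl i) 1 = 0) ∧ (∀ j, (U * Q) (inr j) 0 = 0) ∧
        (Qᵀ * A * Q) 0 1 = 0 ∧ (Qᵀ * A * Q) 1 0 = 0 ∧
        (Qᵀ * A * Q) 0 0 ≠ 0 ∧ (Qᵀ * A * Q) 1 1 ≠ 0) ∨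
      ((∀ j a, (U * Q) (inr j) a = 0) ∧ A.rank = 2) ∨
      ((∀ i a, (U * Q) (inl i) a = 0) ∧ A.rank = 2)) := by
  constructor
  · rintro ⟨hZ, hrank⟩
    have hA2 : A.rank = 2 := (rank_mul_mul_transpose hU A).symm.trans hrank
    obtain ⟨Q, hQ, d, hd, hdiag⟩ :=
      exists_mem_orthogonalGroup_transpose_mul_mul_eq_diagonal_antitone
        (isSymm_transpose_mul_self' U.toRows₁)
    have hAQ : (Qᵀ * A * Q).det ≠ 0 := det_ne_zero_of_rank_eq_card (by
      rw [rank_transpose_mul_mul_of_mem_orthogonalGroup hQ, hA2, Fintype.card_fin])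
    have hZQ : (U * Q).toRows₁ * (Qᵀ * A * Q) * (U * Q).toRows₂ᵀ = 0 := by
      ext i j
      rw [← mul_mul_transpose_inl_inr, mul_mul_transpose_of_mem_orthogonalGroup hQ, hZ,
        Matrix.zero_apply]
    have hXQ : (U * Q).toRows₁ᵀ * (U * Q).toRows₁ = diagonal d := by
      simp only [← hdiag, toRows₁_mul, transpose_mul, Matrix.mul_assoc]
    exact ⟨Q, hQ, (cases_of_toRows₁_mul_mul_transpose_toRows₂_eq_zero
      (transpose_mul_self_mul_of_mem_orthogonalGroup hQ hU) hd hXQ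
      (hA.transpose_mul_mul Q) hAQ hZQ).imp_right (Or.imp (⟨·, hA2⟩) (⟨·, hA2⟩))⟩
  · rintro ⟨Q, hQ, hcase⟩
    have hrank : (Qᵀ * A * Q).rank = 2 := by
      rcases hcase with ⟨-, -, h01, -, h00, h11⟩ | ⟨-, hA2⟩ | ⟨-, hA2⟩
      · refine rank_of_det_ne_zero ?_
        rw [det_fin_two, h01, zero_mul, sub_zero]
        exact mul_ne_zero h00 h11
      all_goals rwa [rank_transpose_mul_mul_of_mem_orthogonalGroup hQ]
    rw [← mul_mul_transpose_of_mem_orthogonalGroup hQ U A]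
    refine ⟨mul_mul_transpose_inl_inr_eq_zero ?_, ?_⟩
    · exact hcase.imp (fun h => ⟨h.1, h.2.1, h.2.2.1⟩) (Or.imp And.left And.left)
    · rw [rank_mul_mul_transpose (transpose_mul_self_mul_of_mem_orthogonalGroup hQ hU), hrank]

/-- characterization of `Z = U A Uᵀ` (with `UᵀU = I₂`, `A` symmetric 2×2)
having zero off-diagonal block and rank 2, in terms of the three structures up to an
orthogonal transformation `Q`. -/
theorem stmt_4 {m₁ m₂ : ℕ} (hm : 2 < m₁ + m₂)
    (U : Matrix (Fin m₁ ⊕ Fin m₂) (Fin 2) ℝ) (hU : Uᵀ * U = 1)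
    (A : Matrix (Fin 2) (Fin 2) ℝ) (hA : A.IsSymm) :
    ((∀ i j, (U * A * Uᵀ) (inl i) (inr j) = 0) ∧ (U * A * Uᵀ).rank = 2) ↔
    ∃ Q ∈ Matrix.orthogonalGroup (Fin 2) ℝ,
      (((∀ i, (U * Q) (inl i) 1 = 0) ∧ (∀ j, (U * Q) (inr j) 0 = 0) ∧
        (Qᵀ * A * Q) 0 1 = 0 ∧ (Qᵀ * A * Q) 1 0 = 0 ∧
        (Qᵀ * A * Q) 0 0 ≠ 0 ∧ (Qᵀ * A * Q) 1 1 ≠ 0) ∨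
      ((∀ j a, (U * Q) (inr j) a = 0) ∧ A.rank = 2) ∨
      ((∀ i a, (U * Q) (inl i) a = 0) ∧ A.rank = 2)) :=
  stmt_4_general U hU A hA
end
end
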